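/- Geometric C¹ condition: the C¹ smoothness conditions across the common edge are equivalent to five coplanarity conditions on control points; e.g., the control point (ξ^R₅, b^R₅) equals η₁(ξ^L₁, b^L₁) + η₂(ξ^L₄, b^L₄) + η₃(ξ^L₅, b^L₅), and similarly for the other four groups, with the same barycentric weights applying simultaneously to the domain points and to the coefficients. -/

import Mathlib

open MeasureTheory

/-- The plane `ℝ²` as a Euclidean space. -/
abbrev V2 := EuclideanSpace ℝ (Fin 2)

/-- The (closed) triangle with vertices `p 0, p 1, p 2`. -/
def tri (p : Fin 3 → V2) : Set V2 := convexHull ℝ (Set.range p)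

/-- The `3·3 = 9` boundary points of the WS₃ split: the vertices together with the
trisection points of the edges. -/
def wsPts (p : Fin 3 → V2) : Set V2 :=
  {x | ∃ i j : Fin 3, ∃ k : Fin 4,
    x = ((k : ℝ) / 3) • p i + (1 - (k : ℝ) / 3) • p j}

/-- The union of all the lines of the complete graph on the 9 boundary points of the
WS₃ split. -/
def cutLines (p : Fin 3 → V2) : Set V2 :=
  {x | ∃ a ∈ wsPts p, ∃ b ∈ wsPts p, a ≠ b ∧
    x ∈ (affineSpan ℝ ({a, b} : Set V2) : Set V2)}

/-- `g` is (the restriction of) a bivariate polynomial of total degree at most `d`. -/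
def IsPolyDeg (d : ℕ) (g : V2 → ℝ) : Prop :=
  ∃ q : MvPolynomial (Fin 2) ℝ, q.totalDegree ≤ d ∧
    ∀ z : V2, g z = MvPolynomial.eval (fun i => z i) q

/-- The spline space `S₃²(Δ_{WS₃})`: functions (extended by zero outside `Δ`) that are
`C²` on the triangle `Δ` and coincide with a cubic polynomial on every open region of
the WS₃ split (the connected components of the interior of `Δ` minus the complete
graph of lines through the 9 boundary points). -/
def splineSpace (p : Fin 3 → V2) : Set (V2 → ℝ) :=
  {f | ContDiffOn ℝ 2 f (tri p) ∧
    (∀ x ∈ interior (tri p) \ cutLines p,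
      ∃ g, IsPolyDeg 3 g ∧
        Set.EqOn f g (connectedComponentIn (interior (tri p) \ cutLines p) x)) ∧
    ∀ x ∉ tri p, f x = 0}

/-- The 28 relative scaling weights of the simplex spline basis on the WS₃ split. -/
noncomputable def wvec : Fin 28 → ℝ :=
  ![1/6, 1/6, 1/6, 1/3, 1/3, 1/3, 1/3, 1/3, 1/3, 1/2, 1/2, 1/2, 1/2, 1/2, 1/2,
    2/3, 2/3, 2/3, 5/6, 5/6, 5/6, 2/3, 2/3, 2/3, 2/3, 2/3, 2/3, 1]

/-- Barycentric coordinates (w.r.t. `Δ`) of the 28 domain points of the simplex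
spline basis (0-indexed; entry `i` corresponds to the paper's `ξ_{i+1}`). -/
noncomputable def bary : Fin 28 → Fin 3 → ℝ :=
  ![![1, 0, 0], ![0, 1, 0], ![0, 0, 1],
    ![8/9, 1/9, 0], ![8/9, 0, 1/9], ![0, 8/9, 1/9],
    ![1/9, 8/9, 0], ![1/9, 0, 8/9], ![0, 1/9, 8/9],
    ![2/3, 1/3, 0], ![2/3, 0, 1/3], ![0, 2/3, 1/3],
    ![1/3, 2/3, 0], ![1/3, 0, 2/3], ![0, 1/3, 2/3],
    ![7/9, 1/9, 1/9], ![1/9, 7/9, 1/9], ![1/9, 1/9, 7/9],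
    ![7/15, 7/15, 1/15], ![1/15, 7/15, 7/15], ![7/15, 1/15, 7/15],
    ![5/9, 1/3, 1/9], ![5/9, 1/9, 1/3], ![1/9, 5/9, 1/3],
    ![1/3, 5/9, 1/9], ![1/3, 1/9, 5/9], ![1/9, 1/3, 5/9],
    ![1/3, 1/3, 1/3]]

/-- The domain points of the simplex spline basis on the triangle `p`. -/
noncomputable def dpt (p : Fin 3 → V2) (i : Fin 28) : V2 :=
  ∑ k : Fin 3, bary i k • p k

/-- The sup-norm of a function over the triangle `p`. -/
noncomputable def supTri (p : Fin 3 → V2) (f : V2 → ℝ) : ℝ :=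
  sSup ((fun x => |f x|) '' tri p)

/-! Substituting `p₄ = η₁ p₁ + η₂ p₂ + η₃ p₃` writes every right domain point in the
barycentric frame of the left triangle; the five domain-point relations then become identities
between barycentric vectors. Given them, a relation between control points in `ℝ² × ℝ`
reduces to the same relation between their last coordinates, the coefficients. -/

theorem Prod.mk_eq_smul_add_smul_add_smul_iff {R M : Type*} [Semiring R] [AddCommMonoid M]
    [Module R M] {x x₁ x₂ x₃ : M} {a₁ a₂ a₃ y y₁ y₂ y₃ : R}
    (hx : x = a₁ • x₁ + a₂ • x₂ + a₃ • x₃) :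
    ((x, y) : M × R) = a₁ • (x₁, y₁) + a₂ • (x₂, y₂) + a₃ • (x₃, y₃) ↔
      y = a₁ * y₁ + a₂ * y₂ + a₃ * y₃ := by
  simp [Prod.ext_iff, hx]

theorem sum_smul_vecCons_eq_of_combination {R M : Type*} [CommRing R] [AddCommGroup M]
    [Module R M] (p₁ p₂ p₃ : M) (η₁ η₂ η₃ : R) (w : Fin 3 → R) :
    ∑ k, w k • ![p₁, p₂, η₁ • p₁ + η₂ • p₂ + η₃ • p₃] k =
      ∑ k, ![w 0 + w 2 * η₁, w 1 + w 2 * η₂, w 2 * η₃] k • ![p₁, p₂, p₃] k := by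
  simp [Fin.sum_univ_three]
  module

theorem dpt_eq_of_bary_eq (p₁ p₂ p₃ : V2) {η₁ η₂ η₃ a b c : ℝ} {i j k l : Fin 28}
    (h : ![bary i 0 + bary i 2 * η₁, bary i 1 + bary i 2 * η₂, bary i 2 * η₃] =
      a • bary j + b • bary k + c • bary l) :
    dpt ![p₁, p₂, η₁ • p₁ + η₂ • p₂ + η₃ • p₃] i =
      a • dpt ![p₁, p₂, p₃] j + b • dpt ![p₁, p₂, p₃] k + c • dpt ![p₁, p₂, p₃] l := by
  rw [dpt, sum_smul_vecCons_eq_of_combination, h]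
  simp only [dpt, ← Fintype.linearCombination_apply ℝ, map_add, map_smul]

theorem dpt_C1_relations (p₁ p₂ p₃ : V2) {η₁ η₂ η₃ : ℝ} (hη : η₁ + η₂ + η₃ = 1) :
    let ξL := dpt ![p₁, p₂, p₃]
    let ξR := dpt ![p₁, p₂, η₁ • p₁ + η₂ • p₂ + η₃ • p₃]
    ξR 4 = η₁ • ξL 0 + η₂ • ξL 3 + η₃ • ξL 4 ∧
      ξR 15 = (η₁ + η₂ / 2) • ξL 3 + (η₂ / 2) • ξL 9 + η₃ • ξL 15 ∧
      ξR 18 = (3 * η₁ / 5 + 2 * η₂ / 5) • ξL 9 + (2 * η₁ / 5 + 3 * η₂ / 5) • ξL 12 +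
        η₃ • ξL 18 ∧
      ξR 16 = (η₁ / 2 + η₂) • ξL 6 + (η₁ / 2) • ξL 12 + η₃ • ξL 16 ∧
      ξR 5 = η₁ • ξL 6 + η₂ • ξL 1 + η₃ • ξL 5 := by
  obtain rfl : η₃ = 1 - η₁ - η₂ := by linarith
  refine ⟨?_, ?_, ?_, ?_, ?_⟩ <;> apply dpt_eq_of_bary_eq <;> ext m <;> fin_cases m <;>
    simp [bary] <;> ring

/-- Indices are 0-based: the paper's `b_i`, `ξ_i` are `b (i-1)`, `ξ (i-1)`. -/
theorem C1_control_point_form_general (p1 p2 p3 p4 : V2)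
    (η1 η2 η3 : ℝ) (hη : η1 + η2 + η3 = 1)
    (hp4 : p4 = η1 • p1 + η2 • p2 + η3 • p3)
    (bL bR : Fin 28 → ℝ)
    (cpL : Fin 28 → V2 × ℝ) (cpR : Fin 28 → V2 × ℝ)
    (hcpL : ∀ i, cpL i = (dpt ![p1, p2, p3] i, bL i))
    (hcpR : ∀ i, cpR i = (dpt ![p1, p2, p4] i, bR i)) :
    (bR 4 = η1 * bL 0 + η2 * bL 3 + η3 * bL 4 ∧
      bR 15 = (η1 + η2 / 2) * bL 3 + (η2 / 2) * bL 9 + η3 * bL 15 ∧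
      bR 18 = (3 * η1 / 5 + 2 * η2 / 5) * bL 9 +
        (2 * η1 / 5 + 3 * η2 / 5) * bL 12 + η3 * bL 18 ∧
      bR 16 = (η1 / 2 + η2) * bL 6 + (η1 / 2) * bL 12 + η3 * bL 16 ∧
      bR 5 = η1 * bL 6 + η2 * bL 1 + η3 * bL 5) ↔
    (cpR 4 = η1 • cpL 0 + η2 • cpL 3 + η3 • cpL 4 ∧
      cpR 15 = (η1 + η2 / 2) • cpL 3 + (η2 / 2) • cpL 9 + η3 • cpL 15 ∧
      cpR 18 = (3 * η1 / 5 + 2 * η2 / 5) • cpL 9 +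
        (2 * η1 / 5 + 3 * η2 / 5) • cpL 12 + η3 • cpL 18 ∧
      cpR 16 = (η1 / 2 + η2) • cpL 6 + (η1 / 2) • cpL 12 + η3 • cpL 16 ∧
      cpR 5 = η1 • cpL 6 + η2 • cpL 1 + η3 • cpL 5) := by
  subst hp4
  obtain ⟨h₄, h₁₅, h₁₈, h₁₆, h₅⟩ := dpt_C1_relations p1 p2 p3 hη
  simp only [hcpL, hcpR]
  rw [Prod.mk_eq_smul_add_smul_add_smul_iff h₄, Prod.mk_eq_smul_add_smul_add_smul_iff h₁₅,
    Prod.mk_eq_smul_add_smul_add_smul_iff h₁₈, Prod.mk_eq_smul_add_smul_add_smul_iff h₁₆,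
    Prod.mk_eq_smul_add_smul_add_smul_iff h₅]

/-- geometric interpretation of the C¹ conditions: the five C¹
coefficient relations across the common edge are equivalent to five coplanarity
relations on the control points `(ξᵢ, bᵢ) ∈ ℝ³`, with the same barycentric weights
`η₁, η₂, η₃` applying simultaneously to the domain points and to the coefficients
(indices are 0-based: paper's `b_i`, `ξ_i` are `b (i-1)`, `ξ (i-1)`). -/
theorem C1_control_point_form (p1 p2 p3 p4 : V2)
    (hL : AffineIndependent ℝ ![p1, p2, p3]) (hR : AffineIndependent ℝ ![p1, p2, p4])
    (η1 η2 η3 : ℝ) (hη : η1 + η2 + η3 = 1)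
    (hp4 : p4 = η1 • p1 + η2 • p2 + η3 • p3)
    (bL bR : Fin 28 → ℝ)
    (cpL : Fin 28 → V2 × ℝ) (cpR : Fin 28 → V2 × ℝ)
    (hcpL : ∀ i, cpL i = (dpt ![p1, p2, p3] i, bL i))
    (hcpR : ∀ i, cpR i = (dpt ![p1, p2, p4] i, bR i)) :
    (bR 4 = η1 * bL 0 + η2 * bL 3 + η3 * bL 4 ∧
      bR 15 = (η1 + η2 / 2) * bL 3 + (η2 / 2) * bL 9 + η3 * bL 15 ∧
      bR 18 = (3 * η1 / 5 + 2 * η2 / 5) * bL 9 +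
        (2 * η1 / 5 + 3 * η2 / 5) * bL 12 + η3 * bL 18 ∧
      bR 16 = (η1 / 2 + η2) * bL 6 + (η1 / 2) * bL 12 + η3 * bL 16 ∧
      bR 5 = η1 * bL 6 + η2 * bL 1 + η3 * bL 5) ↔
    (cpR 4 = η1 • cpL 0 + η2 • cpL 3 + η3 • cpL 4 ∧
      cpR 15 = (η1 + η2 / 2) • cpL 3 + (η2 / 2) • cpL 9 + η3 • cpL 15 ∧
      cpR 18 = (3 * η1 / 5 + 2 * η2 / 5) • cpL 9 +
        (2 * η1 / 5 + 3 * η2 / 5) • cpL 12 + η3 • cpL 18 ∧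
      cpR 16 = (η1 / 2 + η2) • cpL 6 + (η1 / 2) • cpL 12 + η3 • cpL 16 ∧
      cpR 5 = η1 • cpL 6 + η2 • cpL 1 + η3 • cpL 5) :=
  C1_control_point_form_general p1 p2 p3 p4 η1 η2 η3 hη hp4 bL bR cpL cpR hcpL hcpR
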